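/- Let F : [0,1] → ℝ be strictly increasing, continuous, with F(y)-F(x) ≥ y-x for x ≤ y, and let f = F⁻¹ on [F(0),F(1)]. Then {y : f differentiable at y with f'(y) = 0} ⊆ F({x : liminf difference quotient of F at x is +∞}). -/
import Mathlib

open Set Filter

/-- The set where the inverse `f` of `F` has derivative zero is contained in the image
under `F` of the set where `F` has infinite lower derivative. -/
theorem deriv_zero_subset_image_infinite_liminf (F : ℝ → ℝ)
    (hmono : StrictMonoOn F (Icc 0 1)) (hcont : ContinuousOn F (Icc 0 1))
    (hexp : ∀ x ∈ Icc (0:ℝ) 1, ∀ y ∈ Icc (0:ℝ) 1, x ≤ y → y - x ≤ F y - F x)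
    (f : ℝ → ℝ) (hf : ∀ x ∈ Icc (0:ℝ) 1, f (F x) = x) :
    {y ∈ Icc (F 0) (F 1) | HasDerivWithinAt f 0 (Icc (F 0) (F 1)) y} ⊆
      F '' {x ∈ Icc (0:ℝ) 1 |
        Filter.liminf (fun x' => (((F x' - F x) / (x' - x) : ℝ) : EReal))
          (nhdsWithin x (Icc 0 1 \ {x})) = ⊤} := by
  rintro y ⟨hy, hdf⟩
  obtain ⟨x, hx, hFx⟩ := intermediate_value_Icc (by norm_num : (0:ℝ) ≤ 1) hcont hy
  refine ⟨x, ⟨hx, ?_⟩, hFx⟩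
  set L := nhdsWithin x (Icc (0:ℝ) 1 \ {x}) with hL
  -- F maps into the target interval
  have hmaps : ∀ x' ∈ Icc (0:ℝ) 1, F x' ∈ Icc (F 0) (F 1) := fun x' hx' =>
    ⟨hmono.monotoneOn (left_mem_Icc.2 (by norm_num)) hx' hx'.1,
     hmono.monotoneOn hx' (right_mem_Icc.2 (by norm_num)) hx'.2⟩
  -- Tendsto F L within the target
  have htend : Tendsto F L (nhdsWithin y (Icc (F 0) (F 1))) := by
    rw [tendsto_nhdsWithin_iff]
    constructor
    · have := (hcont x hx).tendsto
      rw [hFx] at this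
      exact this.mono_left (nhdsWithin_mono x diff_subset)
    · filter_upwards [self_mem_nhdsWithin] with x' hx'
      exact hmaps x' hx'.1
  -- key littleO fact
  have hlo : (fun z => f z - x) =o[nhdsWithin y (Icc (F 0) (F 1))] fun z => z - y := by
    have := hdf.isLittleO
    have hfy : f y = x := by rw [← hFx]; exact hf x hx
    simpa [hfy] using this
  -- The main estimate
  rw [EReal.eq_top_iff_forall_lt]
  intro M
  have hK : (0:ℝ) < max (M + 1) 1 := lt_of_lt_of_le zero_lt_one (le_max_right _ _)
  set K := max (M + 1) 1 with hKdef
  have hε : (0:ℝ) < 1 / K := by positivity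
  have hev := htend.eventually (hlo.def hε)
  have key : ∀ᶠ x' in L, ((M + 1 : ℝ) : EReal) ≤ (((F x' - F x) / (x' - x) : ℝ) : EReal) := by
    filter_upwards [hev, self_mem_nhdsWithin] with x' h1 h2
    obtain ⟨hx'I, hx'ne⟩ := h2
    have hx'ne : x' ≠ x := by simpa using hx'ne
    rw [hf x' hx'I, ← hFx] at h1
    -- h1 : ‖x' - x‖ ≤ 1/K * ‖F x' - F x‖
    have hden : |x' - x| > 0 := abs_pos.2 (sub_ne_zero.2 hx'ne)
    have hq1 : (1:ℝ) ≤ (F x' - F x) / (x' - x) := by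
      rcases lt_or_gt_of_ne hx'ne with h | h
      · have h2 := hexp x' hx'I x hx h.le
        rw [le_div_iff_of_neg (by linarith : x' - x < 0)]
        linarith
      · have h2 := hexp x hx x' hx'I h.le
        rw [le_div_iff₀ (by linarith : (0:ℝ) < x' - x)]
        linarith
    have habs : K * |x' - x| ≤ |F x' - F x| := by
      rw [Real.norm_eq_abs, Real.norm_eq_abs] at h1
      calc K * |x' - x| ≤ K * (1/K * |F x' - F x|) := by nlinarith
        _ = |F x' - F x| := by field_simp
    have hqK : K ≤ (F x' - F x) / (x' - x) := by
      have : (F x' - F x) / (x' - x) = |F x' - F x| / |x' - x| := by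
        rw [← abs_div, abs_of_nonneg (le_trans zero_le_one hq1)]
      rw [this, le_div_iff₀ hden]
      exact habs
    have hMq : M + 1 ≤ (F x' - F x) / (x' - x) := le_trans (le_max_left (M+1) 1) hqK
    exact_mod_cast hMq
  -- conclude liminf > M
  calc (M : EReal) < ((M + 1 : ℝ) : EReal) := by exact_mod_cast (by linarith : M < M + 1)
    _ ≤ _ := le_liminf_of_le (by isBoundedDefault) key
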